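/- Let μ be a probability measure on the unit circle S¹ with arclength distance d, and let p* ∈ S¹ be a global minimizer of the Fréchet functional F_μ. Define G(θ) = F_μ(e_{p*}(θ)) − F_μ(p*) for θ ∈ [−π,π). Then G(θ) = 2π ∫₀^θ ( t/(2π) − μ_{p*}([−π,−π+t)) ) dt for 0 ≤ θ < π, and G(θ) = 2π ∫_θ^0 ( −t/(2π) − μ_{p*}([π+t,π)) ) dt for −π ≤ θ < 0. -/

import Mathlib

open MeasureTheory Real Set Filter

noncomputable section

/-- The unit circle `S¹` in `ℝ² ≃ ℂ`. -/
abbrev S1 := {x : ℂ // ‖x‖ = 1}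

/-- The arclength distance on `S¹`. -/
def dS1 (x p : S1) : ℝ := 2 * Real.arcsin (‖(x : ℂ) - (p : ℂ)‖ / 2)

/-- The Fréchet functional of a measure `μ` on `S¹`. -/
def frechet (μ : Measure S1) (p : S1) : ℝ := (1/2) * ∫ x, (dS1 x p)^2 ∂μ

/-- The normal coordinate chart centered at `p`: `θ ↦ R_θ p`. -/
def chart (p : S1) (θ : ℝ) : S1 :=
  ⟨Complex.exp (θ * Complex.I) * (p : ℂ), by
    rw [norm_mul, Complex.norm_exp_ofReal_mul_I, p.2, mul_one]⟩

/-- The inverse chart, with values in `[-π, π)`. -/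
def invChart (p₀ : S1) (p : S1) : ℝ :=
  if Complex.arg ((p : ℂ) / (p₀ : ℂ)) = π then -π else Complex.arg ((p : ℂ) / (p₀ : ℂ))

/-- The image measure `μ_{p₀}` of `μ` in the normal chart centered at `p₀`. -/
def chartMeasure (μ : Measure S1) (p₀ : S1) : Measure ℝ := Measure.map (invChart p₀) μ

/-- `m(μ_{p₀})`, the Euclidean mean of the image measure in the chart centered at `p₀`. -/
def mMean (μ : Measure S1) (p₀ : S1) : ℝ := ∫ t, t ∂(chartMeasure μ p₀)

/-- The antipodal point (cut locus) of `p`. -/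
def antipode (p : S1) : S1 := ⟨-(p : ℂ), by rw [norm_neg]; exact p.2⟩

/-- The (left-continuous extension of the) derivative of `θ ↦ F_μ(e_{p₀}(θ))`. -/
def extDerivS1 (μ : Measure S1) (p₀ : S1) (θ : ℝ) : ℝ :=
  if 0 ≤ θ then θ - 2*π*(chartMeasure μ p₀ (Ico (-π) (-π+θ))).toReal - mMean μ p₀
  else θ + 2*π*(chartMeasure μ p₀ (Ico (π+θ) π)).toReal - mMean μ p₀

def basePt : S1 := ⟨1, by norm_num⟩

/-- The (unnormalized) arclength measure on `S¹`, of total mass `2π`. -/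
def arcMeasure : Measure S1 := Measure.map (chart basePt) (volume.restrict (Ico (-π) π))

/-- Property `P(p, α, φ)` for a density `f` on `S¹`. -/
def propP (f : S1 → ℝ) (p : S1) (α φ : ℝ) : Prop :=
  ∀ θ ∈ Ico (-π) π, φ ≤ |θ| → f (chart p θ) ≤ (1 - α)/(2*π)

/-! In the chart at `p`, the squared arclength `d(e_p s, e_p θ)²` is `(s - θ)² - 4π (|s - θ| - π)⁺`,
so `G(θ) = θ²/2 - θ m(μ_p) - 2π ∫ (|s - θ| - π)⁺ dμ_p`. The last term is nonnegative, hence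
minimality of `p` makes `θ ↦ θ²/2 - θ m` locally minimal at `0`, which forces `m = 0`.
By Tonelli the last term is `∫₀^θ μ_p([-π, -π + t)) dt` for `θ ≥ 0` and
`∫_θ^0 μ_p([π + t, π)) dt` for `θ ≤ 0`. -/

lemma chart_add (p : S1) (a b : ℝ) : chart p (a + b) = chart (chart p b) a := by
  apply Subtype.ext
  simp only [chart, Complex.ofReal_add, add_mul, Complex.exp_add, mul_assoc]

lemma continuous_chart (p : S1) : Continuous (chart p) := by
  unfold chart
  fun_prop

lemma continuous_dS1_chart_sq (p q : S1) : Continuous fun s => dS1 (chart p s) q ^ 2 := by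
  unfold dS1
  have := continuous_chart p
  fun_prop

lemma two_mul_arcsin_abs_sin_half {u : ℝ} (hu : |u| ≤ 2 * π) :
    2 * arcsin |sin (u / 2)| = min |u| (2 * π - |u|) := by
  have hsin : |sin (u / 2)| = sin (|u| / 2) := by
    have hnonneg : 0 ≤ sin (|u| / 2) :=
      sin_nonneg_of_nonneg_of_le_pi (by positivity) (by linarith)
    rcases abs_cases u with ⟨h, -⟩ | ⟨h, -⟩ <;> rw [h] at hnonneg ⊢
    · exact abs_of_nonneg hnonneg
    · rw [neg_div, sin_neg] at hnonneg ⊢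
      exact abs_of_nonpos (by linarith)
  rw [hsin]
  rcases le_total |u| π with h | h
  · rw [arcsin_sin (by linarith [abs_nonneg u, pi_pos]) (by linarith), min_eq_left (by linarith)]
    ring
  · rw [← sin_pi_sub, arcsin_sin (by linarith) (by linarith), min_eq_right (by linarith)]
    ring

lemma dS1_chart_self (q : S1) {u : ℝ} (hu : |u| ≤ 2 * π) :
    dS1 (chart q u) q = min |u| (2 * π - |u|) := by
  have hq : (chart q u : ℂ) - q = (Complex.exp (Complex.I * u) - 1) * q := by
    simp only [chart, mul_comm Complex.I]
    ring
  rw [dS1, hq, norm_mul, q.2, mul_one, Complex.norm_exp_I_mul_ofReal_sub_one, norm_mul,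
    Real.norm_two, Real.norm_eq_abs, mul_div_cancel_left₀ _ two_ne_zero,
    two_mul_arcsin_abs_sin_half hu]

lemma min_sub_sq (c x : ℝ) : min x (2 * c - x) ^ 2 = x ^ 2 - 4 * c * max (x - c) 0 := by
  rcases le_total x c with h | h
  · rw [min_eq_left (by linarith), max_eq_right (by linarith)]
    ring
  · rw [min_eq_right (by linarith), max_eq_left (by linarith)]
    ring

lemma half_dS1_chart_sq_sub (p : S1) {s θ : ℝ} (hs : s ∈ Ico (-π) π) (hθ : θ ∈ Icc (-π) π) :
    dS1 (chart p s) (chart p θ) ^ 2 / 2 - dS1 (chart p s) p ^ 2 / 2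
      = θ ^ 2 / 2 - θ * s - 2 * π * max (|s - θ| - π) 0 := by
  obtain ⟨hs₁, hs₂⟩ := hs
  obtain ⟨hθ₁, hθ₂⟩ := hθ
  have hdθ : dS1 (chart p s) (chart p θ) = min |s - θ| (2 * π - |s - θ|) := by
    rw [← dS1_chart_self _ (abs_le.2 ⟨by linarith, by linarith⟩), ← chart_add, sub_add_cancel]
  have hd0 : dS1 (chart p s) p = |s| := by
    rw [dS1_chart_self p (abs_le.2 ⟨by linarith, by linarith⟩),
      min_eq_left (by linarith [abs_le.2 ⟨hs₁, hs₂.le⟩])]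
  rw [hdθ, hd0, min_sub_sq, sq_abs, sq_abs]
  ring

section LayerCake

variable (ν : Measure ℝ)

lemma lintegral_measure_Iio_eq (μ : Measure ℝ) [SFinite μ] [SFinite ν] :
    ∫⁻ t, ν (Iio t) ∂μ = ∫⁻ s, μ (Ioi s) ∂ν := by
  have hS : MeasurableSet {x : ℝ × ℝ | x.2 < x.1} := measurableSet_lt measurable_snd measurable_fst
  exact (Measure.prod_apply hS).symm.trans (Measure.prod_apply_symm hS)

lemma lintegral_measure_Ici_eq (μ : Measure ℝ) [SFinite μ] [SFinite ν] :
    ∫⁻ t, ν (Ici t) ∂μ = ∫⁻ s, μ (Iic s) ∂ν := by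
  have hS : MeasurableSet {x : ℝ × ℝ | x.1 ≤ x.2} := measurableSet_le measurable_fst measurable_snd
  exact (Measure.prod_apply hS).symm.trans (Measure.prod_apply_symm hS)

variable [IsFiniteMeasure ν] {a b : ℝ}

lemma intervalIntegral_measure_Ico_const_left (hab : a ≤ b) (ha : ∀ᵐ s ∂ν, a ≤ s) :
    ∫ t in a..b, (ν (Ico a t)).toReal = ∫ s, max (b - s) 0 ∂ν := by
  have hIco : ∀ t, ν (Ico a t) = ν (Iio t) := fun t =>
    measure_congr (inter_ae_eq_right_of_ae_eq_univ (ae_eq_univ.2 (ae_iff.1 ha)))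
  have hmono : Monotone fun t => ν (Iio t) := fun _ _ h => measure_mono (Iio_subset_Iio h)
  calc ∫ t in a..b, (ν (Ico a t)).toReal
      = (∫⁻ t in Ioc a b, ν (Iio t)).toReal := by
        simp_rw [intervalIntegral.integral_of_le hab, hIco]
        exact integral_toReal hmono.measurable.aemeasurable
          (ae_of_all _ fun _ => measure_lt_top _ _)
    _ = (∫⁻ s, ENNReal.ofReal (b - s) ∂ν).toReal := by
        rw [lintegral_measure_Iio_eq]
        congr 1
        refine lintegral_congr_ae ?_
        filter_upwards [ha] with s hs
        rw [Measure.restrict_apply measurableSet_Ioi, inter_comm, Ioc_inter_Ioi, max_eq_right hs,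
          Real.volume_Ioc]
    _ = ∫ s, max (b - s) 0 ∂ν :=
        (integral_toReal (by fun_prop) (ae_of_all _ fun _ => ENNReal.ofReal_lt_top)).symm

lemma intervalIntegral_measure_Ico_const_right (hab : a ≤ b) (hb : ∀ᵐ s ∂ν, s < b) :
    ∫ t in a..b, (ν (Ico t b)).toReal = ∫ s, max (s - a) 0 ∂ν := by
  have hIco : ∀ t, ν (Ico t b) = ν (Ici t) := fun t =>
    measure_congr (inter_ae_eq_left_of_ae_eq_univ (ae_eq_univ.2 (ae_iff.1 hb)))
  have hanti : Antitone fun t => ν (Ici t) := fun _ _ h => measure_mono (Ici_subset_Ici.2 h)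
  calc ∫ t in a..b, (ν (Ico t b)).toReal
      = (∫⁻ t in Ioc a b, ν (Ici t)).toReal := by
        simp_rw [intervalIntegral.integral_of_le hab, hIco]
        exact integral_toReal hanti.measurable.aemeasurable
          (ae_of_all _ fun _ => measure_lt_top _ _)
    _ = (∫⁻ s, ENNReal.ofReal (s - a) ∂ν).toReal := by
        rw [lintegral_measure_Ici_eq]
        congr 1
        refine lintegral_congr_ae ?_
        filter_upwards [hb] with s hs
        rw [Measure.restrict_apply measurableSet_Iic, Iic_inter_Ioc_of_le hs.le, Real.volume_Ioc]
    _ = ∫ s, max (s - a) 0 ∂ν :=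
        (integral_toReal (by fun_prop) (ae_of_all _ fun _ => ENNReal.ofReal_lt_top)).symm

end LayerCake

section ChartMeasure

variable (μ : Measure S1) (p : S1)

lemma chart_invChart (x : S1) : chart p (invChart p x) = x := by
  have hp : (p : ℂ) ≠ 0 := ne_zero_of_norm_ne_zero (by rw [p.2]; exact one_ne_zero)
  have harg : Complex.exp (Complex.arg (x / p) * Complex.I) = x / p := by
    simpa [x.2, p.2] using Complex.norm_mul_exp_arg_mul_I ((x : ℂ) / p)
  -- `invChart` replaces the value `π` of `arg` by `-π`, which names the same rotation.
  have hrot : Complex.exp (invChart p x * Complex.I)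
      = Complex.exp (Complex.arg (x / p) * Complex.I) := by
    unfold invChart
    split_ifs with h
    · rw [h]
      push_cast
      rw [neg_mul, Complex.exp_neg_pi_mul_I, Complex.exp_pi_mul_I]
    · rfl
  apply Subtype.ext
  simp only [chart]
  rw [hrot, harg, div_mul_cancel₀ _ hp]

lemma invChart_mem_Ico (x : S1) : invChart p x ∈ Ico (-π) π := by
  unfold invChart
  split_ifs with h
  · exact ⟨le_rfl, by linarith [pi_pos]⟩
  · exact ⟨(Complex.neg_pi_lt_arg _).le, (Complex.arg_le_pi _).lt_of_ne h⟩

lemma measurable_invChart : Measurable (invChart p) := by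
  have harg : Measurable fun x : S1 => Complex.arg ((x : ℂ) / p) :=
    Complex.measurable_arg.comp (continuous_subtype_val.div_const _).measurable
  exact Measurable.ite (harg (measurableSet_singleton π)) measurable_const harg

lemma ae_mem_Ico_chartMeasure : ∀ᵐ s ∂chartMeasure μ p, s ∈ Ico (-π) π :=
  (ae_map_iff (measurable_invChart p).aemeasurable measurableSet_Ico).2
    (ae_of_all _ (invChart_mem_Ico p))

instance [IsFiniteMeasure μ] : IsFiniteMeasure (chartMeasure μ p) := by
  unfold chartMeasure
  infer_instance

instance [IsProbabilityMeasure μ] : IsProbabilityMeasure (chartMeasure μ p) :=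
  Measure.isProbabilityMeasure_map (measurable_invChart p).aemeasurable

lemma integrable_chartMeasure_of_continuous [IsFiniteMeasure μ] {f : ℝ → ℝ} (hf : Continuous f) :
    Integrable f (chartMeasure μ p) := by
  have hsupp : ∀ᵐ s ∂chartMeasure μ p, s ∈ Icc (-π) π := by
    filter_upwards [ae_mem_Ico_chartMeasure μ p] with s hs using Ico_subset_Icc_self hs
  rw [← Measure.restrict_eq_self_of_ae_mem hsupp]
  exact hf.continuousOn.integrableOn_compact isCompact_Icc

lemma frechet_eq_integral_chartMeasure (q : S1) :
    frechet μ q = 1 / 2 * ∫ s, dS1 (chart p s) q ^ 2 ∂chartMeasure μ p := by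
  rw [frechet, chartMeasure, integral_map (measurable_invChart p).aemeasurable
    (continuous_dS1_chart_sq p q).aestronglyMeasurable]
  simp only [chart_invChart]

end ChartMeasure

lemma frechet_chart_sub_frechet (μ : Measure S1) [IsProbabilityMeasure μ] (p : S1) {θ : ℝ}
    (hθ : θ ∈ Icc (-π) π) :
    frechet μ (chart p θ) - frechet μ p
      = θ ^ 2 / 2 - θ * mMean μ p - 2 * π * ∫ s, max (|s - θ| - π) 0 ∂chartMeasure μ p := by
  set ν := chartMeasure μ p
  have hint : ∀ {f : ℝ → ℝ}, Continuous f → Integrable f ν :=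
    integrable_chartMeasure_of_continuous μ p
  calc frechet μ (chart p θ) - frechet μ p
      = ∫ s, (dS1 (chart p s) (chart p θ) ^ 2 / 2 - dS1 (chart p s) p ^ 2 / 2) ∂ν := by
        rw [frechet_eq_integral_chartMeasure μ p, frechet_eq_integral_chartMeasure μ p,
          ← integral_const_mul, ← integral_const_mul, ← integral_sub]
        · simp only [one_div_mul_eq_div, ν]
        · exact (hint (continuous_dS1_chart_sq p _)).const_mul _
        · exact (hint (continuous_dS1_chart_sq p _)).const_mul _
    _ = ∫ s, (θ ^ 2 / 2 - θ * s - 2 * π * max (|s - θ| - π) 0) ∂ν := by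
        refine integral_congr_ae ?_
        filter_upwards [ae_mem_Ico_chartMeasure μ p] with s hs
        exact half_dS1_chart_sq_sub p hs hθ
    _ = θ ^ 2 / 2 - θ * mMean μ p - 2 * π * ∫ s, max (|s - θ| - π) 0 ∂ν := by
        rw [integral_sub, integral_sub, integral_const, integral_const_mul, integral_const_mul,
          probReal_univ, one_smul, mMean]
        all_goals exact hint (by fun_prop)

lemma mMean_eq_zero_of_forall_frechet_le (μ : Measure S1) [IsProbabilityMeasure μ] (p : S1)
    (hmin : ∀ q, frechet μ p ≤ frechet μ q) : mMean μ p = 0 := by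
  set m := mMean μ p
  have hlocal : IsLocalMin (fun θ : ℝ => θ ^ 2 / 2 - θ * m) 0 := by
    filter_upwards [Icc_mem_nhds (neg_lt_zero.2 pi_pos) pi_pos] with θ hθ
    have hexcess : 0 ≤ ∫ s, max (|s - θ| - π) 0 ∂chartMeasure μ p :=
      integral_nonneg fun s => le_max_right _ _
    have hG := frechet_chart_sub_frechet μ p hθ
    linarith [hmin (chart p θ), pi_pos, mul_nonneg pi_pos.le hexcess]
  have hderiv : HasDerivAt (fun θ : ℝ => θ ^ 2 / 2 - θ * m) (-m) 0 := by
    simpa using ((hasDerivAt_id' (0 : ℝ)).pow 2 |>.div_const 2).fun_sub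
      ((hasDerivAt_id' (0 : ℝ)).mul_const m)
  exact neg_eq_zero.1 (hlocal.hasDerivAt_eq_zero hderiv)

section Excess

variable (μ : Measure S1) [IsFiniteMeasure μ] (p : S1) {θ : ℝ}

lemma integral_max_abs_sub_sub_pi_of_nonneg (hθ : θ ∈ Icc 0 π) :
    ∫ s, max (|s - θ| - π) 0 ∂chartMeasure μ p
      = ∫ t in (0 : ℝ)..θ, (chartMeasure μ p (Ico (-π) (-π + t))).toReal := by
  have hsupp := ae_mem_Ico_chartMeasure μ p
  rw [intervalIntegral.integral_comp_add_left (fun t => (chartMeasure μ p (Ico (-π) t)).toReal),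
    add_zero, intervalIntegral_measure_Ico_const_left _ (by linarith [hθ.1])
      (by filter_upwards [hsupp] with s hs using hs.1)]
  refine integral_congr_ae ?_
  filter_upwards [hsupp] with s hs
  rcases le_total s θ with h | h
  · rw [abs_of_nonpos (by linarith)]
    ring_nf
  · rw [abs_of_nonneg (by linarith), max_eq_right (by linarith [hs.2, hθ.1]),
      max_eq_right (by linarith [pi_pos])]

lemma integral_max_abs_sub_sub_pi_of_nonpos (hθ : θ ∈ Icc (-π) 0) :
    ∫ s, max (|s - θ| - π) 0 ∂chartMeasure μ p
      = ∫ t in θ..(0 : ℝ), (chartMeasure μ p (Ico (π + t) π)).toReal := by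
  have hsupp := ae_mem_Ico_chartMeasure μ p
  rw [intervalIntegral.integral_comp_add_left (fun t => (chartMeasure μ p (Ico t π)).toReal),
    add_zero, intervalIntegral_measure_Ico_const_right _ (by linarith [hθ.2])
      (by filter_upwards [hsupp] with s hs using hs.2)]
  refine integral_congr_ae ?_
  filter_upwards [hsupp] with s hs
  rcases le_total θ s with h | h
  · rw [abs_of_nonneg (by linarith)]
    ring_nf
  · rw [abs_of_nonpos (by linarith), max_eq_right (by linarith [hs.1, hθ.2]),
      max_eq_right (by linarith [pi_pos])]

end Excess

/-- Lemma `lemme:g`: explicit integral formula for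
`G(θ) = F_μ(e_{p*}(θ)) - F_μ(p*)` at a global minimizer `p*`. -/
theorem G_integral_formula (μ : Measure S1) [IsProbabilityMeasure μ] (pstar : S1)
    (hmin : ∀ q : S1, frechet μ pstar ≤ frechet μ q) :
    (∀ θ ∈ Ico (0:ℝ) π,
      frechet μ (chart pstar θ) - frechet μ pstar
        = 2*π * ∫ t in (0:ℝ)..θ,
            (t / (2*π) - (chartMeasure μ pstar (Ico (-π) (-π + t))).toReal)) ∧
    (∀ θ ∈ Ico (-π) (0:ℝ),
      frechet μ (chart pstar θ) - frechet μ pstar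
        = 2*π * ∫ t in θ..(0:ℝ),
            (-t / (2*π) - (chartMeasure μ pstar (Ico (π + t) π)).toReal)) := by
  have hmean := mMean_eq_zero_of_forall_frechet_le μ pstar hmin
  refine ⟨fun θ ⟨hθ₀, hθπ⟩ => ?_, fun θ ⟨hθπ, hθ₀⟩ => ?_⟩
  · have hmono : Monotone fun t => (chartMeasure μ pstar (Ico (-π) (-π + t))).toReal :=
      fun a b h => ENNReal.toReal_mono (measure_ne_top _ _)
        (measure_mono (Ico_subset_Ico_right (by linarith)))
    rw [frechet_chart_sub_frechet μ pstar ⟨by linarith [pi_pos], hθπ.le⟩, hmean,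
      integral_max_abs_sub_sub_pi_of_nonneg μ pstar ⟨hθ₀, hθπ.le⟩,
      intervalIntegral.integral_sub (Continuous.intervalIntegrable (by fun_prop) _ _)
        hmono.intervalIntegrable,
      intervalIntegral.integral_div, integral_id]
    field_simp
    ring
  · have hanti : Antitone fun t => (chartMeasure μ pstar (Ico (π + t) π)).toReal :=
      fun a b h => ENNReal.toReal_mono (measure_ne_top _ _)
        (measure_mono (Ico_subset_Ico_left (by linarith)))
    rw [frechet_chart_sub_frechet μ pstar ⟨hθπ, by linarith [pi_pos]⟩, hmean,
      integral_max_abs_sub_sub_pi_of_nonpos μ pstar ⟨hθπ, hθ₀.le⟩,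
      intervalIntegral.integral_sub (Continuous.intervalIntegrable (by fun_prop) _ _)
        hanti.intervalIntegrable,
      intervalIntegral.integral_div, intervalIntegral.integral_neg, integral_id]
    field_simp
    ring
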